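/- For every nontrivial degree-one character χ of H(n+1,q) ≅ (F_q^n, +) and every 1 ≤ k ≤ n+1, the multiplicity of χ in the permutation representation of H(n+1,q) on the set of k-dimensional subspaces of F_q^{n+1} not contained in F_q^n equals the Gaussian binomial coefficient [n−1 choose k−1]_q. -/

import Mathlib

/-- The matrix `[[I, a], [0, 1]]` over `F`, indexed by `Fin n ⊕ Unit`. -/
def Hmat {F : Type} [Field F] {n : ℕ} (a : Fin n → F) :
    Matrix (Fin n ⊕ Unit) (Fin n ⊕ Unit) F :=
  Matrix.fromBlocks 1 (Matrix.of fun i (_ : Unit) => a i) 0 1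

/-- The action of the element `[[I, a], [0, 1]]` of `H(n+1, q)` on subspaces of
`F_q^{n+1}`. -/
def actH {F : Type} [Field F] {n : ℕ} (a : Fin n → F)
    (X : Submodule F (Fin n ⊕ Unit → F)) : Submodule F (Fin n ⊕ Unit → F) :=
  Submodule.map (Matrix.mulVecLin (Hmat a)) X

/-- The Gaussian (q-)binomial coefficient, via the q-Pascal recursion. -/
def gaussBinom (q : ℕ) : ℕ → ℕ → ℕ
  | _, 0 => 1
  | 0, _ + 1 => 0
  | n + 1, k + 1 => gaussBinom q n k + q ^ (k + 1) * gaussBinom q n (k + 1)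

/-!
The element `a` of `H(n+1, q)` acts on `F_q^{n+1}` by the transvection `x ↦ x + x_{n+1} • (a, 0)`,
so a subspace `X ⊄ F_q^n` is fixed by `a` iff `(a, 0) ∈ X`. A `k`-dimensional `X ⊄ F_q^n`
is `W ⊔ F ∙ x` with `W = X ⊓ F_q^n` and `x ∈ X` of last coordinate `1`, and `x` can be chosen in
`q ^ (k - 1)` ways; hence `a` fixes `q ^ (n - k + 1)` times as many such `X` as there are
`(k - 1)`-dimensional `U ≤ F_q^n` containing `a`. Summing `conj (χ a)` over these and exchanging
the sums, each `U` contributes `q ^ (k - 1)` if `χ` is trivial on `U` and `0` otherwise. The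
subspaces on which `χ` is trivial are those of a hyperplane of `F_q^n`, and the same decomposition
along a hyperplane counts the `(k - 1)`-dimensional ones as `[n - 1, k - 1]_q`.
-/

open Module Submodule

@[simp] lemma gaussBinom_zero_right (q n : ℕ) : gaussBinom q n 0 = 1 := by
  cases n <;> rfl

-- The q-Pascal rule with the other weighting, scaled by `q ^ k` so that no truncated
-- subtraction `q ^ (n - k)` appears.
lemma pow_mul_gaussBinom_succ_succ (q n k : ℕ) :
    q ^ k * gaussBinom q (n + 1) (k + 1) =
      q ^ n * gaussBinom q n k + q ^ k * gaussBinom q n (k + 1) := by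
  induction n generalizing k with
  | zero => cases k <;> simp [gaussBinom]
  | succ n ih =>
    have h0 := ih 0
    cases k with
    | zero =>
      simp only [gaussBinom, pow_zero, one_mul, zero_add, pow_one, mul_one] at h0 ⊢
      linear_combination q * h0
    | succ k =>
      have h1 := ih k
      have h2 := ih (k + 1)
      simp only [gaussBinom] at h1 h2 ⊢
      linear_combination q * h1 + q ^ (k + 2) * h2

section Hyperplane

variable {F V : Type*} [Field F] [AddCommGroup V] [Module F V] {π : V →ₗ[F] F} {x : V}

lemma sup_span_inf_ker {W : Submodule F V} (hW : W ≤ LinearMap.ker π) (hx : π x = 1) :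
    (W ⊔ F ∙ x) ⊓ LinearMap.ker π = W := by
  refine le_antisymm (fun u ⟨hu, huker⟩ => ?_) (le_inf le_sup_left hW)
  obtain ⟨w, hw, y, hy, rfl⟩ := mem_sup.mp hu
  obtain ⟨c, rfl⟩ := mem_span_singleton.mp hy
  have hc : c = 0 := by simpa [hx, LinearMap.mem_ker.mp (hW hw)] using huker
  simpa [hc] using hw

lemma inf_ker_sup_span {X : Submodule F V} (hxX : x ∈ X) (hx : π x = 1) :
    X ⊓ LinearMap.ker π ⊔ F ∙ x = X := by
  refine le_antisymm (sup_le inf_le_left ((span_singleton_le_iff_mem _ _).mpr hxX)) fun u hu => ?_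
  have hker : u - π u • x ∈ X ⊓ LinearMap.ker π :=
    ⟨X.sub_mem hu (X.smul_mem _ hxX), by simp [hx]⟩
  simpa using add_mem_sup hker (smul_mem _ (π u) (mem_span_singleton_self x))

lemma not_le_ker_of_mem {X : Submodule F V} (hxX : x ∈ X) (hx : π x = 1) :
    ¬ X ≤ LinearMap.ker π :=
  fun h => one_ne_zero (hx.symm.trans (h hxX))

lemma exists_mem_apply_eq_one {X : Submodule F V} (hX : ¬ X ≤ LinearMap.ker π) :
    ∃ x ∈ X, π x = 1 := by
  obtain ⟨y, hyX, hy⟩ := SetLike.not_le_iff_exists.mp hX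
  have hy : π y ≠ 0 := hy
  exact ⟨(π y)⁻¹ • y, X.smul_mem _ hyX, by simp [hy]⟩

lemma natCard_mem_apply_eq_one {X : Submodule F V} {x₀ : V} (hx₀X : x₀ ∈ X) (hx₀ : π x₀ = 1) :
    Nat.card {x // x ∈ X ∧ π x = 1} = Nat.card ↥(X ⊓ LinearMap.ker π) :=
  Nat.card_congr
    { toFun := fun x => ⟨x - x₀, X.sub_mem x.2.1 hx₀X, by simp [x.2.2, hx₀]⟩
      invFun := fun y => ⟨y + x₀, X.add_mem y.2.1 hx₀X, by simp [LinearMap.mem_ker.mp y.2.2, hx₀]⟩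
      left_inv := fun x => by simp
      right_inv := fun y => by simp }

lemma map_transvection_eq_self_iff {w : V} (hw : π w = 0) {X : Submodule F V}
    (hX : ¬ X ≤ LinearMap.ker π) :
    X.map (LinearMap.transvection π w) = X ↔ w ∈ X := by
  refine ⟨fun h => ?_, fun hwX => le_antisymm ?_ fun x hx => ?_⟩
  · obtain ⟨x, hxX, hx⟩ := exists_mem_apply_eq_one hX
    have := h ▸ mem_map_of_mem (f := LinearMap.transvection π w) hxX
    rw [LinearMap.transvection.apply, hx, one_smul] at this
    simpa using X.sub_mem this hxX
  · exact map_le_iff_le_comap.mpr fun x hx => X.add_mem hx (X.smul_mem _ hwX)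
  · exact ⟨x - π x • w, X.sub_mem hx (X.smul_mem _ hwX), by
      simp [LinearMap.transvection.apply, hw]⟩

variable [FiniteDimensional F V]

lemma finrank_sup_span_of_le_ker {W : Submodule F V} (hW : W ≤ LinearMap.ker π)
    (hx : π x = 1) : finrank F ↥(W ⊔ F ∙ x) = finrank F W + 1 :=
  finrank_sup_span_singleton fun hxW => by simpa [hx] using hW hxW

lemma finrank_inf_ker_add_one {X : Submodule F V} (hX : ¬ X ≤ LinearMap.ker π) :
    finrank F ↥(X ⊓ LinearMap.ker π) + 1 = finrank F X := by
  obtain ⟨x, hxX, hx⟩ := exists_mem_apply_eq_one hX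
  rw [← finrank_sup_span_of_le_ker inf_le_right hx, inf_ker_sup_span hxX hx]

lemma finrank_ker_add_one (hx : π x = 1) : finrank F (LinearMap.ker π) + 1 = finrank F V := by
  have := finrank_inf_ker_add_one (not_le_ker_of_mem mem_top hx)
  rwa [top_inf_eq, finrank_top] at this

end Hyperplane

section Counting

variable {F V : Type*} [Field F] [Fintype F] [AddCommGroup V] [Module F V] [Finite V]

lemma natCard_submodule (W : Submodule F V) : Nat.card W = Fintype.card F ^ finrank F W := by
  rw [Module.natCard_eq_pow_finrank (K := F), Nat.card_eq_fintype_card]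

theorem natCard_not_le_ker_mul_pow {π : V →ₗ[F] F} {v : V} (hv : π v = 1)
    (Q : Submodule F V → Prop) (j : ℕ) :
    Nat.card {X : Submodule F V //
        finrank F X = j + 1 ∧ ¬ X ≤ LinearMap.ker π ∧ Q (X ⊓ LinearMap.ker π)} *
        Fintype.card F ^ j =
      Nat.card {W : Submodule F V // finrank F W = j ∧ W ≤ LinearMap.ker π ∧ Q W} *
        Fintype.card F ^ finrank F (LinearMap.ker π) := by
  set K := LinearMap.ker π
  let C := {X : Submodule F V // finrank F X = j + 1 ∧ ¬ X ≤ K ∧ Q (X ⊓ K)}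
  let A := {W : Submodule F V // finrank F W = j ∧ W ≤ K ∧ Q W}
  -- `(W, x) ↦ (W ⊔ F ∙ x, x)` with inverse `(X, x) ↦ (X ⊓ K, x)`
  let e : A × {x // π x = 1} ≃ Σ X : C, {x // x ∈ X.1 ∧ π x = 1} :=
    { toFun := fun p => ⟨⟨p.1.1 ⊔ F ∙ p.2.1,
          by rw [finrank_sup_span_of_le_ker p.1.2.2.1 p.2.2, p.1.2.1],
          not_le_ker_of_mem (mem_sup_right (mem_span_singleton_self _)) p.2.2,
          by rw [sup_span_inf_ker p.1.2.2.1 p.2.2]; exact p.1.2.2.2⟩,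
        ⟨p.2.1, mem_sup_right (mem_span_singleton_self _), p.2.2⟩⟩
      invFun := fun y => (⟨y.1.1 ⊓ K,
          Nat.add_right_cancel ((finrank_inf_ker_add_one y.1.2.2.1).trans y.1.2.1),
          inf_le_right, y.1.2.2.2⟩, ⟨y.2.1, y.2.2.2⟩)
      left_inv := fun p => Prod.ext (Subtype.ext (sup_span_inf_ker p.1.2.2.1 p.2.2)) rfl
      right_inv := fun y => Sigma.subtype_ext (Subtype.ext (inf_ker_sup_span y.2.2.1 y.2.2.2)) rfl }
  have hfiber (X : C) : Nat.card {x // x ∈ X.1 ∧ π x = 1} = Fintype.card F ^ j := by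
    obtain ⟨x, hxX, hx⟩ := exists_mem_apply_eq_one X.2.2.1
    rw [natCard_mem_apply_eq_one hxX hx, natCard_submodule,
      Nat.add_right_cancel ((finrank_inf_ker_add_one X.2.2.1).trans X.2.1)]
  have hbase : Nat.card {x // π x = 1} = Fintype.card F ^ finrank F K := by
    rw [← natCard_submodule, ← top_inf_eq K, ← natCard_mem_apply_eq_one mem_top hv]
    exact Nat.card_congr (Equiv.subtypeEquivRight fun x => by simp)
  have : Fintype C := Fintype.ofFinite C
  calc Nat.card C * Fintype.card F ^ j
      = ∑ X : C, Nat.card {x // x ∈ X.1 ∧ π x = 1} := by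
        simp [hfiber, Nat.card_eq_fintype_card]
    _ = Nat.card (A × {x // π x = 1}) := by rw [Nat.card_congr e, Nat.card_sigma]
    _ = Nat.card A * Fintype.card F ^ finrank F K := by rw [Nat.card_prod, hbase]

end Counting

lemma natCard_subtype_eq_add {α : Type*} [Finite α] (P Q : α → Prop) :
    Nat.card {x // P x} = Nat.card {x // P x ∧ Q x} + Nat.card {x // P x ∧ ¬ Q x} := by
  classical
  have := Fintype.ofFinite α
  simp only [Nat.card_eq_fintype_card, Fintype.card_subtype]
  rw [← Finset.card_filter_add_card_filter_not Q, Finset.filter_filter, Finset.filter_filter]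

lemma natCard_submodule_map {R U V : Type*} [Semiring R] [AddCommMonoid U] [Module R U]
    [AddCommMonoid V] [Module R V] {f : U →ₗ[R] V} (hf : Function.Injective f)
    (P : Submodule R V → Prop) (hP : ∀ W, P W → W ≤ LinearMap.range f) :
    Nat.card {W // P W} = Nat.card {U' : Submodule R U // P (U'.map f)} := by
  refine (Nat.card_congr (Equiv.ofBijective (fun U' => ⟨U'.1.map f, U'.2⟩) ⟨?_, ?_⟩)).symm
  · exact fun U₁ U₂ h => Subtype.ext (map_injective_of_injective hf (congrArg Subtype.val h))
  · intro W
    have hW : (W.1.comap f).map f = W.1 := by rw [map_comap_eq, inf_eq_right.mpr (hP W.1 W.2)]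
    exact ⟨⟨W.1.comap f, by rw [hW]; exact W.2⟩, Subtype.ext hW⟩

lemma natCard_finrank_eq_and_le {F V : Type*} [Field F] [AddCommGroup V] [Module F V]
    (K : Submodule F V) (j : ℕ) :
    Nat.card {X : Submodule F V // finrank F X = j ∧ X ≤ K} =
      Nat.card {Y : Submodule F K // finrank F Y = j} := by
  rw [natCard_submodule_map K.injective_subtype _ fun X hX => by simpa using hX.2]
  simp only [finrank_map_subtype_eq, map_subtype_le, and_true]

section Grassmannian

variable {F : Type*} [Field F] [Fintype F]

theorem natCard_finrank_eq (V : Type*) [AddCommGroup V] [Module F V] [Finite V] (j : ℕ) :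
    Nat.card {X : Submodule F V // finrank F X = j} =
      gaussBinom (Fintype.card F) (finrank F V) j := by
  obtain ⟨m, hm⟩ : ∃ m, finrank F V = m := ⟨_, rfl⟩
  rw [hm]
  induction m generalizing V j with
  | zero =>
    cases j with
    | zero => simp
    | succ j =>
      rw [Nat.card_eq_zero.mpr (.inl ⟨fun X => by have := X.1.finrank_le; omega⟩)]
      rfl
  | succ m ih =>
    cases j with
    | zero => simp
    | succ j =>
      obtain ⟨v, hv0⟩ := finrank_pos_iff_exists_ne_zero.mp (by omega : 0 < finrank F V)
      obtain ⟨π, hv⟩ := Projective.exists_dual_eq_one F hv0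
      have hK : finrank F (LinearMap.ker π) = m := by
        have := finrank_ker_add_one hv
        omega
      have hle (i : ℕ) : Nat.card {X : Submodule F V // finrank F X = i ∧ X ≤ LinearMap.ker π} =
          gaussBinom (Fintype.card F) m i := by
        rw [natCard_finrank_eq_and_le]
        exact ih _ i hK
      have hnle := natCard_not_le_ker_mul_pow hv (fun _ => True) j
      simp only [and_true] at hnle
      rw [hle, hK] at hnle
      apply Nat.eq_of_mul_eq_mul_left (pow_pos (Fintype.card_pos (α := F)) j)
      rw [pow_mul_gaussBinom_succ_succ, natCard_subtype_eq_add _ (· ≤ LinearMap.ker π), hle]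
      linear_combination hnle

end Grassmannian

section Character

open ComplexConjugate

variable {F V : Type*} [Field F] [AddCommGroup V] [Module F V]

variable (F) in
def AddChar.kerSubmodule {M : Type*} [Monoid M] (χ : AddChar V M) : Submodule F V where
  carrier := {a | ∀ t : F, χ (t • a) = 1}
  zero_mem' t := by simp
  add_mem' ha hb t := by simp [smul_add, AddChar.map_add_eq_mul, ha t, hb t]
  smul_mem' c a ha t := by simpa [smul_smul] using ha (t * c)

lemma AddChar.le_kerSubmodule_iff {M : Type*} [Monoid M] {χ : AddChar V M}
    {U : Submodule F V} : U ≤ χ.kerSubmodule F ↔ ∀ u ∈ U, χ u = 1 :=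
  ⟨fun h u hu => by simpa using h hu 1, fun h _ ha t => h _ (U.smul_mem t ha)⟩

lemma AddChar.finrank_kerSubmodule_add_one [Fintype F] [FiniteDimensional F V]
    {χ : AddChar V ℂ} (hχ : χ ≠ 1) : finrank F (χ.kerSubmodule F) + 1 = finrank F V := by
  obtain ⟨a, ha⟩ := AddChar.ne_one_iff.mp hχ
  let ψ (b : V) : AddChar F ℂ :=
    χ.compAddMonoidHom (LinearMap.toSpanSingleton F V b).toAddMonoidHom
  have hψa : ψ a ≠ 1 := AddChar.ne_one_iff.mpr ⟨1, by simpa [ψ] using ha⟩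
  -- the shifts of one nontrivial character of `F` are all the `|F|` characters of `F`
  have hshift : Function.Bijective (ψ a).mulShift :=
    (Fintype.bijective_iff_injective_and_card _).mpr
      ⟨to_mulShift_inj_of_isPrimitive (IsPrimitive.of_ne_one hψa), by simp⟩
  have hsup : χ.kerSubmodule F ⊔ F ∙ a = ⊤ := by
    refine eq_top_iff.mpr fun b _ => ?_
    obtain ⟨s, hs⟩ := hshift.2 (ψ b)
    have hker : b - s • a ∈ χ.kerSubmodule F := fun t => by
      have hst : χ ((s * t) • a) = χ (t • b) := DFunLike.congr_fun hs t
      rw [smul_sub, smul_smul, mul_comm, map_sub_eq_div, hst, div_self]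
      exact (χ.val_isUnit _).ne_zero
    simpa using add_mem_sup hker (smul_mem _ s (mem_span_singleton_self a))
  have haK : a ∉ χ.kerSubmodule F := fun h => ha (by simpa using h 1)
  rw [← finrank_sup_span_singleton haK, hsup, finrank_top]

open scoped Classical in
lemma AddChar.sum_ite_mem_conj [Fintype V] (χ : AddChar V ℂ) (U : Submodule F V) :
    ∑ a : V, (if a ∈ U then conj (χ a) else 0) =
      if U ≤ χ.kerSubmodule F then (Nat.card U : ℂ) else 0 := by
  let χU : AddChar U ℂ := χ.compAddMonoidHom U.subtype.toAddMonoidHom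
  have hχU : χU = 0 ↔ U ≤ χ.kerSubmodule F := by
    rw [le_kerSubmodule_iff, AddChar.eq_zero_iff]
    exact ⟨fun h u hu => h ⟨u, hu⟩, fun h u => h u u.2⟩
  rw [← Finset.sum_filter, Finset.sum_subtype _ (p := (· ∈ U)) (by simp), ← map_sum,
    show ∑ u : U, χ u = ∑ u, χU u from rfl, AddChar.sum_eq_ite, Nat.card_eq_fintype_card]
  split_ifs <;> simp_all

theorem AddChar.sum_conj_mul_natCard_mem [Fintype F] [Fintype V] (χ : AddChar V ℂ) (j : ℕ) :
    ∑ a : V, conj (χ a) * (Nat.card {U : Submodule F V // finrank F U = j ∧ a ∈ U} : ℂ) =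
      Fintype.card F ^ j *
        Nat.card {U : Submodule F V // finrank F U = j ∧ U ≤ χ.kerSubmodule F} := by
  classical
  have := Fintype.ofFinite (Submodule F V)
  let S : Finset (Submodule F V) := {U | finrank F U = j}
  have hcard (P : Submodule F V → Prop) [DecidablePred P] :
      Nat.card {U : Submodule F V // finrank F U = j ∧ P U} = (S.filter P).card := by
    rw [Nat.card_eq_fintype_card, Fintype.card_subtype, Finset.filter_filter]
  calc ∑ a : V, conj (χ a) * (Nat.card {U : Submodule F V // finrank F U = j ∧ a ∈ U} : ℂ)
      = ∑ U ∈ S, ∑ a : V, (if a ∈ U then conj (χ a) else 0) := by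
        simp_rw [hcard, Finset.card_filter, Nat.cast_sum, Finset.mul_sum]
        rw [Finset.sum_comm]
        simp
    _ = ∑ U ∈ S, if U ≤ χ.kerSubmodule F then (Fintype.card F : ℂ) ^ j else 0 := by
        refine Finset.sum_congr rfl fun U hU => ?_
        rw [sum_ite_mem_conj, natCard_submodule, (Finset.mem_filter.mp hU).2]
        push_cast; rfl
    _ = _ := by rw [Finset.sum_ite, Finset.sum_const_zero, add_zero, Finset.sum_const, hcard,
          nsmul_eq_mul, mul_comm]

end Character

section Heis

variable {F : Type} [Field F] {n : ℕ}

def extendZero : (Fin n → F) →ₗ[F] (Fin n ⊕ Unit → F) where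
  toFun a := Sum.elim a 0
  map_add' a b := by ext (i | i) <;> simp
  map_smul' c a := by ext (i | i) <;> simp

lemma extendZero_injective : Function.Injective (extendZero : (Fin n → F) →ₗ[F] _) :=
  fun _ _ h => funext fun i => congrFun h (Sum.inl i)

lemma range_extendZero :
    LinearMap.range (extendZero : (Fin n → F) →ₗ[F] _) =
      LinearMap.ker (LinearMap.proj (R := F) (Sum.inr () : Fin n ⊕ Unit)) := by
  refine le_antisymm (LinearMap.range_le_iff_comap.mpr (by ext; simp [extendZero])) fun x hx => ?_
  exact ⟨fun i => x (Sum.inl i), by ext (i | ⟨⟩) <;> simp_all [extendZero]⟩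

lemma Hmat_mulVecLin (a : Fin n → F) :
    (Hmat a).mulVecLin = LinearMap.transvection (LinearMap.proj (Sum.inr ())) (extendZero a) := by
  ext x (i | ⟨⟩) <;> simp [Hmat, Matrix.mulVec, dotProduct, Fintype.sum_sum_type,
    Matrix.fromBlocks, Matrix.one_apply, LinearMap.transvection.apply, extendZero, mul_comm]

lemma actH_eq_self_iff (a : Fin n → F) {X : Submodule F (Fin n ⊕ Unit → F)}
    (hX : ¬ X ≤ LinearMap.ker (LinearMap.proj (Sum.inr ()))) :
    actH a X = X ↔ extendZero a ∈ X := by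
  rw [actH, Hmat_mulVecLin]
  exact map_transvection_eq_self_iff rfl hX

lemma natCard_fixed_mul_pow [Fintype F] (a : Fin n → F) (j : ℕ) :
    Nat.card {X : Submodule F (Fin n ⊕ Unit → F) // finrank F X = j + 1 ∧
        ¬ X ≤ LinearMap.ker (LinearMap.proj (R := F) (Sum.inr () : Fin n ⊕ Unit)) ∧
        actH a X = X} * Fintype.card F ^ j =
      Nat.card {U : Submodule F (Fin n → F) // finrank F U = j ∧ a ∈ U} *
        Fintype.card F ^ n := by
  set π : Dual F (Fin n ⊕ Unit → F) := LinearMap.proj (Sum.inr ())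
  have hv : π (Pi.single (Sum.inr ()) 1) = 1 := by simp [π]
  have hK : finrank F (LinearMap.ker π) = n := by
    have := finrank_ker_add_one hv
    simp only [finrank_fintype_fun_eq_card, Fintype.card_sum, Fintype.card_fin,
      Fintype.card_unit] at this
    omega
  have hfix : Nat.card {X : Submodule F (Fin n ⊕ Unit → F) // finrank F X = j + 1 ∧
        ¬ X ≤ LinearMap.ker π ∧ actH a X = X} =
      Nat.card {X : Submodule F (Fin n ⊕ Unit → F) // finrank F X = j + 1 ∧
        ¬ X ≤ LinearMap.ker π ∧ extendZero a ∈ X ⊓ LinearMap.ker π} :=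
    Nat.card_congr <| Equiv.subtypeEquivRight fun X => and_congr_right fun _ =>
      and_congr_right fun hX => by
        rw [actH_eq_self_iff a hX, mem_inf,
          and_iff_left (show extendZero a ∈ LinearMap.ker π from rfl)]
  rw [hfix, natCard_not_le_ker_mul_pow hv (extendZero a ∈ ·), hK,
    natCard_submodule_map extendZero_injective _ fun W hW => by rw [range_extendZero]; exact hW.2.1]
  congr 1
  refine Nat.card_congr (Equiv.subtypeEquivRight fun U => ?_)
  have hle : U.map extendZero ≤ LinearMap.ker π := LinearMap.map_le_range.trans_eq range_extendZero
  rw [← (equivMapOfInjective _ extendZero_injective U).finrank_eq]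
  simp [hle, extendZero_injective.eq_iff]

end Heis

theorem multiplicity_nontrivial_char_general (F : Type) [Field F] [Fintype F] (n k : ℕ)
    (hk1 : 1 ≤ k)
    (Hyp : Submodule F (Fin n ⊕ Unit → F))
    (hHyp : Hyp = LinearMap.ker (LinearMap.proj (R := F) (Sum.inr () : Fin n ⊕ Unit)))
    (χ : AddChar (Fin n → F) ℂ) (hχ : ∃ a : Fin n → F, χ a ≠ 1) :
    (1 / (Fintype.card F : ℂ) ^ n) *
        ∑ a : Fin n → F, (starRingEnd ℂ) (χ a) *
          (Nat.card {X : Submodule F (Fin n ⊕ Unit → F) //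
            Module.finrank F ↥X = k ∧ ¬ X ≤ Hyp ∧ actH a X = X} : ℂ) =
      (gaussBinom (Fintype.card F) (n - 1) (k - 1) : ℂ) := by
  obtain ⟨j, rfl⟩ : ∃ j, k = j + 1 := ⟨k - 1, by omega⟩
  subst hHyp
  have hq : (Fintype.card F : ℂ) ≠ 0 := Nat.cast_ne_zero.mpr Fintype.card_ne_zero
  have hfix (a : Fin n → F) : (Nat.card {X : Submodule F (Fin n ⊕ Unit → F) //
      finrank F X = j + 1 ∧ ¬ X ≤ LinearMap.ker (LinearMap.proj (Sum.inr ())) ∧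
        actH a X = X} : ℂ) =
      (Fintype.card F : ℂ) ^ n / (Fintype.card F : ℂ) ^ j *
        Nat.card {U : Submodule F (Fin n → F) // finrank F U = j ∧ a ∈ U} := by
    rw [div_mul_eq_mul_div, eq_div_iff (pow_ne_zero _ hq), mul_comm (_ ^ n)]
    exact_mod_cast natCard_fixed_mul_pow a j
  have hK : finrank F (χ.kerSubmodule F) = n - 1 := by
    have := χ.finrank_kerSubmodule_add_one (F := F) (AddChar.ne_one_iff.mpr hχ)
    rw [finrank_fin_fun] at this
    omega
  simp_rw [hfix, mul_left_comm _ (_ / _), ← Finset.mul_sum, χ.sum_conj_mul_natCard_mem,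
    natCard_finrank_eq_and_le, natCard_finrank_eq, hK, Nat.add_sub_cancel]
  field_simp

/-- For every nontrivial degree-one character `χ` of `H(n+1, q) ≅ (F_q^n, +)` and
`1 ≤ k ≤ n+1`, the multiplicity `[χ, ψ_k]` of `χ` in the permutation representation of
`H(n+1, q)` on the `k`-dimensional subspaces of `F_q^{n+1}` not contained in `F_q^n`
equals `[n-1, k-1]_q`.  The multiplicity is computed by the character inner product
`(1/|H|) ∑_g conj(χ(g)) ψ_k(g)`, where `ψ_k(g)` is the number of fixed points of `g`. -/
theorem multiplicity_nontrivial_char (F : Type) [Field F] [Fintype F] (n k : ℕ)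
    (hn : 1 ≤ n) (hk1 : 1 ≤ k) (hk2 : k ≤ n + 1)
    (Hyp : Submodule F (Fin n ⊕ Unit → F))
    (hHyp : Hyp = LinearMap.ker (LinearMap.proj (R := F) (Sum.inr () : Fin n ⊕ Unit)))
    (χ : AddChar (Fin n → F) ℂ) (hχ : ∃ a : Fin n → F, χ a ≠ 1) :
    (1 / (Fintype.card F : ℂ) ^ n) *
        ∑ a : Fin n → F, (starRingEnd ℂ) (χ a) *
          (Nat.card {X : Submodule F (Fin n ⊕ Unit → F) //
            Module.finrank F ↥X = k ∧ ¬ X ≤ Hyp ∧ actH a X = X} : ℂ) =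
      (gaussBinom (Fintype.card F) (n - 1) (k - 1) : ℂ) :=
  multiplicity_nontrivial_char_general F n k hk1 Hyp hHyp χ hχ
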